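/- For the complete graph $K_n$ and any rule $\mathcal{R}$, the expected edge cover time of greedy random walk satisfies ${\mathbb E}[C_E(K_n)] \leq \binom{n}{2} + \sum_{i=1}^{n-1} \frac{n-1}{n-i}$. -/

import Mathlib

open MeasureTheory ProbabilityTheory ENNReal

namespace GRW

variable {V : Type*}

/-- The set of edges traversed by a trajectory `x` during the time interval `[0, t]`. -/
def traversed (x : ℕ → V) (t : ℕ) : Set (Sym2 V) :=
  {e | ∃ s : ℕ, 0 < s ∧ s ≤ t ∧ e = s(x (s - 1), x s)}

/-- The neighbours of `v` reachable along an edge not yet traversed by the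
trajectory `x` up to time `t` (i.e. the endpoints of the edges in `J_t(v)`). -/
def freshNbrs (G : SimpleGraph V) (x : ℕ → V) (t : ℕ) (v : V) : Set V :=
  {w | G.Adj v w ∧ s(v, w) ∉ traversed x t}

/-- The event that the process `X` follows the trajectory `x` up to time `t`. -/
def prefixEvent {Ω : Type*} (X : ℕ → Ω → V) (t : ℕ) (x : ℕ → V) : Set Ω :=
  {ω | ∀ i ≤ t, X i ω = x i}

/-- `X` is a greedy random walk on `G` (with an arbitrary rule `𝓡`): conditioned on any
trajectory prefix of positive probability, the next step goes along an untraversed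
incident edge whenever one exists, and otherwise to a uniformly random neighbour. -/
def IsGRW {Ω : Type*} [MeasurableSpace Ω] (G : SimpleGraph V) [G.LocallyFinite]
    (μ : Measure Ω) (X : ℕ → Ω → V) : Prop :=
  (∀ t, @Measurable Ω V _ ⊤ (X t)) ∧
  ∀ (t : ℕ) (x : ℕ → V), μ (prefixEvent X t x) ≠ 0 →
    ((freshNbrs G x t (x t)).Nonempty →
      (μ[|prefixEvent X t x]) {ω | X (t + 1) ω ∈ freshNbrs G x t (x t)} = 1) ∧
    (freshNbrs G x t (x t) = ∅ →
      ∀ w : V, G.Adj (x t) w →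
        (μ[|prefixEvent X t x]) {ω | X (t + 1) ω = w} = ((G.degree (x t) : ℝ≥0∞))⁻¹) ∧
    (μ[|prefixEvent X t x]) {ω | G.Adj (x t) (X (t + 1) ω)} = 1

/-- `Y` is a simple random walk on `G`: conditioned on any trajectory prefix of positive
probability, the next step goes to a uniformly random neighbour. -/
def IsSRW {Ω : Type*} [MeasurableSpace Ω] (G : SimpleGraph V) [G.LocallyFinite]
    (μ : Measure Ω) (Y : ℕ → Ω → V) : Prop :=
  (∀ t, @Measurable Ω V _ ⊤ (Y t)) ∧
  ∀ (t : ℕ) (x : ℕ → V), μ (prefixEvent Y t x) ≠ 0 →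
    (∀ w : V, G.Adj (x t) w →
      (μ[|prefixEvent Y t x]) {ω | Y (t + 1) ω = w} = ((G.degree (x t) : ℝ≥0∞))⁻¹) ∧
    (μ[|prefixEvent Y t x]) {ω | G.Adj (x t) (Y (t + 1) ω)} = 1

/-- The edge cover time of the process `X` on the graph `G`, as an extended natural
number (`⊤` if the edges are never all traversed). -/
noncomputable def edgeCoverTime (G : SimpleGraph V) {Ω : Type*} (X : ℕ → Ω → V)
    (ω : Ω) : ℕ∞ :=
  sInf ((↑) '' {t : ℕ | G.edgeSet ⊆ traversed (fun s => X s ω) t})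

/-- The vertex cover time of the process `Y`, as an extended natural number. -/
noncomputable def vertexCoverTime {Ω : Type*} (Y : ℕ → Ω → V) (ω : Ω) : ℕ∞ :=
  sInf ((↑) '' {t : ℕ | ∀ v : V, ∃ s ≤ t, Y s ω = v})

end GRW

/-!
Split the times before the edge cover time according to whether the walker stands at a vertex
that still has an untraversed edge. Almost surely a greedy walk then traverses a new edge, so
there are at most `C(n, 2)` such times. Otherwise the walker stands in the set `B` of saturated
vertices, say with `|B| = b`, and moves to a uniform neighbour: it stays in `B` (with `B`
unchanged) with probability at most `(b - 1) / (n - 1)`, and otherwise `|B|` grows or the walker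
leaves `B`. Since `|B|` only grows, it reaches `b` at most once, so the expected number of times
with `|B| = b` is at most the mean `(n - 1) / (n - b)` of the geometric escape time.
-/

open Finset

lemma ENNReal.one_sub_natCast_sub_one_div {n b : ℕ} (hb : 1 ≤ b) (hbn : b < n) :
    1 - ((b - 1 : ℕ) / (n - 1 : ℕ) : ℝ≥0∞) = ((n - b : ℕ) / (n - 1 : ℕ) : ℝ≥0∞) := by
  have hn : ((n - 1 : ℕ) : ℝ≥0∞) ≠ 0 := Nat.cast_ne_zero.2 (by omega)
  rw [← ENNReal.div_self hn (ENNReal.natCast_ne_top _), ← ENNReal.sub_div fun _ _ => hn,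
    ← ENNReal.natCast_sub]
  congr 2
  omega

/-- Summing `c (t + 1) ≤ q * c t + s t` over `t` gives `(1 - q) ∑ c ≤ c 0 + ∑ s`. -/
lemma ENNReal.tsum_le_div_of_le_mul_add {c s : ℕ → ℝ≥0∞} {q : ℝ≥0∞} (hq : q < 1)
    (hc : ∀ t, c t ≠ ∞) (h : ∀ t, c (t + 1) ≤ q * c t + s t) :
    ∑' t, c t ≤ (c 0 + ∑' t, s t) / (1 - q) := by
  refine ENNReal.tsum_le_of_sum_range_le fun m => ?_
  have hA : ∑ t ∈ range m, c t ≤ c 0 + ∑' t, s t + q * ∑ t ∈ range m, c t := by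
    cases m with
    | zero => simp
    | succ m =>
      calc ∑ t ∈ range (m + 1), c t = c 0 + ∑ t ∈ range m, c (t + 1) := by
            rw [Finset.sum_range_succ', add_comm]
        _ ≤ c 0 + (q * ∑ t ∈ range m, c t + ∑ t ∈ range m, s t) := by
            rw [Finset.mul_sum, ← Finset.sum_add_distrib]
            gcongr with t
            exact h t
        _ ≤ c 0 + ∑' t, s t + q * ∑ t ∈ range (m + 1), c t := by
            rw [add_assoc, add_comm (q * _)]
            gcongr
            · exact ENNReal.sum_le_tsum _
            · omega
  have hfin : ∑ t ∈ range m, c t ≠ ∞ := ENNReal.sum_ne_top.2 fun t _ => hc t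
  rw [ENNReal.le_div_iff_mul_le (Or.inl (tsub_pos_of_lt hq).ne') (Or.inl (by simp)),
    ENNReal.mul_sub fun _ _ => hfin, mul_one, mul_comm, tsub_le_iff_right]
  exact hA

open Classical in
lemma MeasureTheory.tsum_measure_le_of_ae_card_filter_le {Ω : Type*} [MeasurableSpace Ω]
    {μ : Measure Ω} [IsProbabilityMeasure μ] {A : ℕ → Set Ω} (hA : ∀ t, MeasurableSet (A t))
    {K : ℕ} (h : ∀ᵐ ω ∂μ, ∀ m, #{t ∈ range m | ω ∈ A t} ≤ K) :
    ∑' t, μ (A t) ≤ K :=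
  calc ∑' t, μ (A t) = ∫⁻ ω, ∑' t, (A t).indicator 1 ω ∂μ := by
        rw [lintegral_tsum fun t => (measurable_one.indicator (hA t)).aemeasurable]
        exact tsum_congr fun t => (lintegral_indicator_one (hA t)).symm
    _ ≤ ∫⁻ _, (K : ℝ≥0∞) ∂μ := by
        refine lintegral_mono_ae <| h.mono fun ω hω => ENNReal.tsum_le_of_sum_range_le fun m => ?_
        simpa [Set.indicator_apply, Finset.sum_boole] using hω m
    _ = K := by simp

lemma ProbabilityTheory.measure_inter_compl_eq_zero_of_cond_eq_one {Ω : Type*}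
    [MeasurableSpace Ω] {μ : Measure Ω} [IsFiniteMeasure μ] {A s : Set Ω}
    (hA : MeasurableSet A) (hs : MeasurableSet s) (h : μ[s | A] = 1) : μ (A ∩ sᶜ) = 0 := by
  by_cases h0 : μ A = 0
  · exact measure_mono_null Set.inter_subset_left h0
  have := cond_isProbabilityMeasure (μ := μ) h0
  rw [← cond_mul_eq_inter hA, (prob_compl_eq_zero_iff hs).2 h, zero_mul]

lemma ENat.toENNReal_eq_tsum_ite (m : ℕ∞) :
    (m : ℝ≥0∞) = ∑' t : ℕ, if (t : ℕ∞) < m then 1 else 0 := by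
  induction m using ENat.recTopCoe with
  | top => simp
  | coe k =>
    rw [tsum_eq_sum (s := range k) fun t ht => by simpa using ht]
    simp [Finset.sum_boole, Finset.filter_true_of_mem fun t ht => Finset.mem_range.1 ht]

namespace GRW

section Prefix

variable {V Ω : Type*} {X : ℕ → Ω → V} {t : ℕ}

def initialSegment (X : ℕ → Ω → V) (t : ℕ) (ω : Ω) : Fin (t + 1) → V := fun i => X i ω

def DependsOnPrefix (X : ℕ → Ω → V) (t : ℕ) (E : Set Ω) : Prop :=
  ∀ ⦃ω ω'⦄, (∀ i ≤ t, X i ω = X i ω') → ω ∈ E → ω' ∈ E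

lemma initialSegment_preimage_eq_prefixEvent (ω : Ω) :
    initialSegment X t ⁻¹' {initialSegment X t ω} = prefixEvent X t (X · ω) := by
  ext ω'
  simp only [Set.mem_preimage, Set.mem_singleton_iff, funext_iff, initialSegment, prefixEvent,
    Set.mem_ofPred_eq, Fin.forall_iff, Nat.lt_succ_iff]

variable [MeasurableSpace Ω]

lemma measurableSet_initialSegment_preimage (hX : ∀ t, @Measurable Ω V _ ⊤ (X t))
    (p : Fin (t + 1) → V) : MeasurableSet (initialSegment X t ⁻¹' {p}) := by
  have : initialSegment X t ⁻¹' {p} = ⋂ i : Fin (t + 1), X i ⁻¹' {p i} := by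
    ext ω; simp [initialSegment, funext_iff]
  rw [this]
  exact .iInter fun i => hX i MeasurableSpace.measurableSet_top

lemma measurableSet_prefixEvent (hX : ∀ t, @Measurable Ω V _ ⊤ (X t)) (ω : Ω) :
    MeasurableSet (prefixEvent X t (X · ω)) :=
  initialSegment_preimage_eq_prefixEvent (X := X) ω ▸ measurableSet_initialSegment_preimage hX _

lemma DependsOnPrefix.measurableSet [Finite V] (hX : ∀ t, @Measurable Ω V _ ⊤ (X t))
    {E : Set Ω} (hE : DependsOnPrefix X t E) : MeasurableSet E := by
  have : E = ⋃ p ∈ initialSegment X t '' E, initialSegment X t ⁻¹' {p} := by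
    rw [Set.biUnion_preimage_singleton]
    refine (Set.subset_preimage_image _ _).antisymm ?_
    rintro ω ⟨ω', hω', hseg⟩
    exact hE (fun i hi => congrFun hseg ⟨i, Nat.lt_succ_of_le hi⟩) hω'
  rw [this]
  exact .biUnion (Set.to_countable _) fun p _ => measurableSet_initialSegment_preimage hX p

lemma sum_measure_initialSegment_preimage_inter [Fintype V]
    (hX : ∀ t, @Measurable Ω V _ ⊤ (X t)) (μ : Measure Ω) (A : Set Ω) :
    ∑ p, μ (initialSegment X t ⁻¹' {p} ∩ A) = μ A := by
  have h := sum_measure_preimage_singleton (μ := μ.restrict A) (f := initialSegment X t)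
    Finset.univ fun p _ => measurableSet_initialSegment_preimage hX p
  simpa [Measure.restrict_apply (measurableSet_initialSegment_preimage hX _)] using h

lemma DependsOnPrefix.measure_inter_le [Fintype V] (hX : ∀ t, @Measurable Ω V _ ⊤ (X t))
    {μ : Measure Ω} {E A : Set Ω} (hE : DependsOnPrefix X t E) {r : ℝ≥0∞}
    (h : ∀ ω ∈ E, μ (prefixEvent X t (X · ω)) ≠ 0 →
      μ (prefixEvent X t (X · ω) ∩ A) ≤ r * μ (prefixEvent X t (X · ω))) :
    μ (E ∩ A) ≤ r * μ E := by
  rw [← sum_measure_initialSegment_preimage_inter hX μ (E ∩ A),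
    ← sum_measure_initialSegment_preimage_inter hX μ E, Finset.mul_sum]
  refine Finset.sum_le_sum fun p _ => ?_
  rcases Set.eq_empty_or_nonempty (initialSegment X t ⁻¹' {p} ∩ E) with hempty | ⟨ω, hωp, hωE⟩
  · simp [← Set.inter_assoc, hempty]
  have hcell : initialSegment X t ⁻¹' {p} = prefixEvent X t (X · ω) := by
    rw [← hωp, initialSegment_preimage_eq_prefixEvent]
  have hsub : prefixEvent X t (X · ω) ⊆ E := fun _ hω' => hE (fun i hi => (hω' i hi).symm) hωE
  rw [hcell, Set.inter_eq_left.2 hsub, ← Set.inter_assoc, Set.inter_eq_left.2 hsub]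
  by_cases h0 : μ (prefixEvent X t (X · ω)) = 0
  · simp [measure_mono_null Set.inter_subset_left h0]
  · exact h ω hωE h0

end Prefix

section Trajectory

variable {V : Type*} {x y : ℕ → V} {t t' : ℕ}

lemma traversed_mono (h : t ≤ t') : traversed x t ⊆ traversed x t' :=
  fun _ ⟨s, hs0, hst, he⟩ => ⟨s, hs0, hst.trans h, he⟩

lemma traversed_congr (h : ∀ i ≤ t, x i = y i) : traversed x t = traversed y t := by
  ext e
  refine exists_congr fun s => and_congr_right fun _ => and_congr_right fun hst => ?_
  rw [h s hst, h (s - 1) ((Nat.sub_le s 1).trans hst)]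

lemma traversed_zero : traversed x 0 = ∅ := by
  ext e
  simp only [traversed, Set.mem_ofPred_eq, Set.mem_empty_iff_false, iff_false]
  omega

lemma freshNbrs_congr (G : SimpleGraph V) (h : ∀ i ≤ t, x i = y i) :
    freshNbrs G x t = freshNbrs G y t := by
  unfold freshNbrs; rw [traversed_congr h]

lemma step_mem_traversed_succ : s(x t, x (t + 1)) ∈ traversed x (t + 1) :=
  ⟨t + 1, t.succ_pos, le_rfl, rfl⟩

open Classical in
/-- Steps along not yet traversed edges use pairwise distinct edges. -/
lemma card_filter_fresh_step_le (G : SimpleGraph V) [Fintype G.edgeSet]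
    (hx : ∀ t, G.Adj (x t) (x (t + 1))) (m : ℕ) :
    #{t ∈ Finset.range m | s(x t, x (t + 1)) ∉ traversed x t} ≤ #G.edgeFinset := by
  refine Finset.card_le_card_of_injOn (fun t => s(x t, x (t + 1)))
    (fun t _ => G.mem_edgeFinset.2 (hx t)) ?_
  intro t ht t' ht' (heq : s(x t, x (t + 1)) = s(x t', x (t' + 1)))
  simp only [Finset.coe_filter, Set.mem_ofPred_eq] at ht ht'
  by_contra hne
  rcases Nat.lt_or_gt_of_ne hne with hlt | hlt
  · exact ht'.2 (heq ▸ traversed_mono hlt step_mem_traversed_succ)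
  · exact ht.2 (heq.symm ▸ traversed_mono hlt step_mem_traversed_succ)

def IsSaturated (x : ℕ → V) (t : ℕ) (v : V) : Prop :=
  ∀ w, w ≠ v → s(v, w) ∈ traversed x t

lemma IsSaturated.mono {v : V} (h : t ≤ t') (hv : IsSaturated x t v) : IsSaturated x t' v :=
  fun w hw => traversed_mono h (hv w hw)

lemma isSaturated_congr (h : ∀ i ≤ t, x i = y i) {v : V} :
    IsSaturated x t v ↔ IsSaturated y t v := by
  simp only [IsSaturated, traversed_congr h]

lemma freshNbrs_top_eq_empty_iff {v : V} :
    freshNbrs ⊤ x t v = ∅ ↔ IsSaturated x t v := by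
  simp only [Set.eq_empty_iff_forall_notMem, freshNbrs, SimpleGraph.top_adj, IsSaturated,
    Set.mem_ofPred_eq, not_and, not_not]
  exact forall_congr' fun w => ⟨fun h hw => h (Ne.symm hw), fun h hw => h (Ne.symm hw)⟩

lemma edgeSet_top_subset_traversed_iff :
    (⊤ : SimpleGraph V).edgeSet ⊆ traversed x t ↔ ∀ v, IsSaturated x t v := by
  refine ⟨fun h v w hw => h (by simpa using hw.symm), fun h e he => ?_⟩
  induction e with
  | _ v w => exact h v w (Ne.symm (by simpa using he))

def IsGreedyStep (G : SimpleGraph V) (x : ℕ → V) (t : ℕ) : Prop :=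
  G.Adj (x t) (x (t + 1)) ∧
    ((freshNbrs G x t (x t)).Nonempty → x (t + 1) ∈ freshNbrs G x t (x t))

lemma IsGreedyStep.step_notMem_traversed (h : IsGreedyStep ⊤ x t)
    (hsat : ¬ IsSaturated x t (x t)) : s(x t, x (t + 1)) ∉ traversed x t :=
  (h.2 (Set.nonempty_iff_ne_empty.2 (mt freshNbrs_top_eq_empty_iff.1 hsat))).2

/-- Otherwise the step would use a fresh edge, which is not among the traversed edges at the
saturated target. -/
lemma IsGreedyStep.isSaturated_of_isSaturated_succ (h : IsGreedyStep ⊤ x t)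
    (hsat : IsSaturated x t (x (t + 1))) : IsSaturated x t (x t) := by
  by_contra hns
  exact h.step_notMem_traversed hns (Sym2.eq_swap ▸ hsat (x t) h.1)

section Fintype

variable [Fintype V]

open Classical in
/-- The bad set `B_t` of the paper. -/
noncomputable def saturatedSet (x : ℕ → V) (t : ℕ) : Finset V := {v | IsSaturated x t v}

lemma mem_saturatedSet {v : V} : v ∈ saturatedSet x t ↔ IsSaturated x t v := by
  simp [saturatedSet]

lemma saturatedSet_mono (h : t ≤ t') : saturatedSet x t ⊆ saturatedSet x t' :=
  fun _ hv => mem_saturatedSet.2 ((mem_saturatedSet.1 hv).mono h)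

lemma saturatedSet_congr (h : ∀ i ≤ t, x i = y i) : saturatedSet x t = saturatedSet y t := by
  ext v; simp only [mem_saturatedSet, isSaturated_congr h]

end Fintype

end Trajectory

section CoverTime

variable {V Ω : Type*} {X : ℕ → Ω → V} {t : ℕ}

lemma lt_edgeCoverTime_iff {G : SimpleGraph V} {ω : Ω} :
    (t : ℕ∞) < edgeCoverTime G X ω ↔ ¬ G.edgeSet ⊆ traversed (X · ω) t := by
  unfold edgeCoverTime
  refine ⟨fun h hcov => (sInf_le (Set.mem_image_of_mem _ hcov)).not_gt h, fun hcov => ?_⟩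
  refine (ENat.natCast_lt_natCast.2 t.lt_succ_self).trans_le (le_sInf ?_)
  rintro _ ⟨s, hs, rfl⟩
  exact ENat.natCast_le_natCast.2 (lt_of_not_ge fun hst => hcov (hs.trans (traversed_mono hst)))

variable [MeasurableSpace Ω] {μ : Measure Ω}

lemma lintegral_edgeCoverTime [Finite V] (G : SimpleGraph V)
    (hX : ∀ t, @Measurable Ω V _ ⊤ (X t)) :
    ∫⁻ ω, (edgeCoverTime G X ω : ℝ≥0∞) ∂μ =
      ∑' t, μ {ω | ¬ G.edgeSet ⊆ traversed (X · ω) t} := by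
  have hmeas (t : ℕ) : MeasurableSet {ω | ¬ G.edgeSet ⊆ traversed (X · ω) t} :=
    DependsOnPrefix.measurableSet (t := t) hX fun ω ω' h => by
      simp only [Set.mem_ofPred_eq, traversed_congr h, imp_self]
  classical
  simp_rw [ENat.toENNReal_eq_tsum_ite, lt_edgeCoverTime_iff]
  rw [lintegral_tsum fun t =>
    (Measurable.ite (hmeas t) measurable_const measurable_const).aemeasurable]
  refine tsum_congr fun t => ?_
  simpa [Set.indicator_apply] using lintegral_indicator_one (μ := μ) (hmeas t)

end CoverTime

section Walk

variable {V Ω : Type*} [MeasurableSpace Ω] {μ : Measure Ω} {X : ℕ → Ω → V}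

lemma IsGRW.measure_prefixEvent_inter_not_isGreedyStep [IsFiniteMeasure μ] {G : SimpleGraph V}
    [G.LocallyFinite] (hX : IsGRW G μ X) (t : ℕ) (ω : Ω) :
    μ (prefixEvent X t (X · ω) ∩ {ω' | ¬ IsGreedyStep G (X · ω') t}) = 0 := by
  set x : ℕ → V := (X · ω)
  set P := prefixEvent X t x
  by_cases h0 : μ P = 0
  · exact measure_mono_null Set.inter_subset_left h0
  obtain ⟨hfresh, -, hadj⟩ := hX.2 t x h0
  have hP : MeasurableSet P := measurableSet_prefixEvent hX.1 ω
  have hnext (S : Set V) : MeasurableSet {ω' | X (t + 1) ω' ∈ S} :=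
    hX.1 (t + 1) MeasurableSpace.measurableSet_top
  have hadj0 := measure_inter_compl_eq_zero_of_cond_eq_one hP (hnext _) hadj
  have hfresh0 (hF : (freshNbrs G x t (x t)).Nonempty) :=
    measure_inter_compl_eq_zero_of_cond_eq_one hP (hnext _) (hfresh hF)
  refine measure_mono_null ?_ (measure_union_null hadj0 (measure_iUnion_null hfresh0))
  rintro ω' ⟨hω'P, hbad⟩
  have hxt : X t ω' = x t := hω'P t le_rfl
  rw [Set.mem_ofPred_eq, IsGreedyStep, hxt, freshNbrs_congr G hω'P, not_and_or,
    Classical.not_imp] at hbad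
  rcases hbad with hbad | ⟨hF, hbad⟩
  · exact Or.inl ⟨hω'P, hbad⟩
  · exact Or.inr (Set.mem_iUnion.2 ⟨hF, hω'P, hbad⟩)

lemma IsGRW.ae_isGreedyStep [Fintype V] [IsFiniteMeasure μ] {G : SimpleGraph V}
    [G.LocallyFinite] (hX : IsGRW G μ X) : ∀ᵐ ω ∂μ, ∀ t, IsGreedyStep G (X · ω) t := by
  refine ae_all_iff.2 fun t => ae_iff.2 ?_
  have hdep : DependsOnPrefix X t (Set.univ : Set Ω) := fun _ _ _ _ => trivial
  simpa using hdep.measure_inter_le hX.1 (r := 0) fun ω _ _ => by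
    rw [zero_mul]; exact (hX.measure_prefixEvent_inter_not_isGreedyStep t ω).le

end Walk

section CompleteGraph

variable {V Ω : Type*} [Fintype V] {X : ℕ → Ω → V} {b t : ℕ}

def stuckEvent (X : ℕ → Ω → V) (b t : ℕ) : Set Ω :=
  {ω | IsSaturated (X · ω) t (X t ω) ∧ #(saturatedSet (X · ω) t) = b}

def stayEvent (X : ℕ → Ω → V) (t : ℕ) : Set Ω :=
  {ω | X (t + 1) ω ∈ saturatedSet (X · ω) t ∧ X (t + 1) ω ≠ X t ω}

def enterEvent (X : ℕ → Ω → V) (b t : ℕ) : Set Ω :=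
  {ω | #(saturatedSet (X · ω) t) < b ∧ b ≤ #(saturatedSet (X · ω) (t + 1))}

lemma dependsOnPrefix_stuckEvent : DependsOnPrefix X t (stuckEvent X b t) := by
  intro ω ω' h ⟨hsat, hcard⟩
  refine ⟨?_, by rwa [← saturatedSet_congr h]⟩
  rwa [← h t le_rfl, ← isSaturated_congr h]

lemma dependsOnPrefix_enterEvent : DependsOnPrefix X (t + 1) (enterEvent X b t) := by
  intro ω ω' h
  have ht : ∀ i ≤ t, X i ω = X i ω' := fun i hi => h i (hi.trans t.le_succ)
  simp only [enterEvent, Set.mem_ofPred_eq, saturatedSet_congr h, saturatedSet_congr ht,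
    imp_self]

lemma stuckEvent_zero (hb : b < Fintype.card V) : stuckEvent X b 0 = ∅ := by
  refine Set.eq_empty_of_forall_notMem fun ω ⟨hsat, hcard⟩ => hb.ne ?_
  have hsingleton (w : V) : w = X 0 ω := by simpa [traversed_zero] using hsat w
  have hall : saturatedSet (X · ω) 0 = Finset.univ :=
    Finset.eq_univ_of_forall fun v => mem_saturatedSet.2 fun w hwv =>
      absurd ((hsingleton w).trans (hsingleton v).symm) hwv
  rw [← hcard, hall, Finset.card_univ]

lemma mem_enterEvent_or_mem_stuckEvent_inter_stayEvent {ω : Ω}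
    (hgreedy : IsGreedyStep ⊤ (X · ω) t) (hω : ω ∈ stuckEvent X b (t + 1)) :
    ω ∈ enterEvent X b t ∨ ω ∈ stuckEvent X b t ∩ stayEvent X t := by
  obtain ⟨hsat, hcard⟩ := hω
  set x : ℕ → V := (X · ω)
  have hmono := saturatedSet_mono (x := x) t.le_succ
  rcases (hcard ▸ Finset.card_le_card hmono).lt_or_eq with hlt | heq
  · exact Or.inl ⟨hlt, hcard.ge⟩
  have hB : saturatedSet x t = saturatedSet x (t + 1) :=
    Finset.eq_of_subset_of_card_le hmono (by rw [heq, hcard])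
  have hnext : IsSaturated x t (x (t + 1)) := mem_saturatedSet.1 (hB ▸ mem_saturatedSet.2 hsat)
  exact Or.inr ⟨⟨hgreedy.isSaturated_of_isSaturated_succ hnext, heq⟩,
    mem_saturatedSet.2 hnext, (hgreedy.1 : x t ≠ x (t + 1)).symm⟩

lemma pairwise_disjoint_enterEvent : Pairwise (Function.onFun Disjoint (enterEvent X b)) := by
  refine pairwise_disjoint_on _ |>.2 fun i j hij => Set.disjoint_left.2 ?_
  rintro ω ⟨-, hi⟩ ⟨hj, -⟩
  exact (hi.trans (Finset.card_le_card (saturatedSet_mono hij))).not_gt hj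

lemma setOf_not_edgeSet_subset_traversed_subset :
    {ω | ¬ (⊤ : SimpleGraph V).edgeSet ⊆ traversed (X · ω) t} ⊆
      {ω | ¬ IsSaturated (X · ω) t (X t ω)} ∪
        ⋃ b ∈ Icc 1 (Fintype.card V - 1), stuckEvent X b t := by
  intro ω hω
  by_cases hsat : IsSaturated (X · ω) t (X t ω)
  · obtain ⟨v, hv⟩ := not_forall.1 (mt edgeSet_top_subset_traversed_iff.2 hω)
    have hpos := Finset.card_pos.2 ⟨_, mem_saturatedSet.2 hsat⟩
    have hlt := Finset.card_lt_univ_of_notMem (mt mem_saturatedSet.1 hv)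
    exact Or.inr (Set.mem_biUnion (Finset.mem_Icc.2 ⟨hpos, by omega⟩) ⟨hsat, rfl⟩)
  · exact Or.inl hsat

variable [MeasurableSpace Ω] {μ : Measure Ω}

/-- From a saturated vertex all steps are uniform, and only `b - 1` of the `|V| - 1`
neighbours lie in the saturated set. -/
lemma IsGRW.measure_stuckEvent_inter_stayEvent_le [DecidableEq V] [IsFiniteMeasure μ]
    (hX : IsGRW (⊤ : SimpleGraph V) μ X) :
    μ (stuckEvent X b t ∩ stayEvent X t) ≤
      ((b - 1 : ℕ) / (Fintype.card V - 1 : ℕ) : ℝ≥0∞) * μ (stuckEvent X b t) := by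
  refine dependsOnPrefix_stuckEvent.measure_inter_le hX.1 fun ω ⟨hsat, hcard⟩ h0 => ?_
  set x : ℕ → V := (X · ω)
  set P := prefixEvent X t x
  have hP : MeasurableSet P := measurableSet_prefixEvent hX.1 ω
  have hstep (w : V) (hw : w ∈ (saturatedSet x t).erase (x t)) :
      μ (P ∩ {ω' | X (t + 1) ω' = w}) = ((Fintype.card V - 1 : ℕ) : ℝ≥0∞)⁻¹ * μ P := by
    have hunif := (hX.2 t x h0).2.1 (freshNbrs_top_eq_empty_iff.2 hsat) w
      ((SimpleGraph.top_adj _ _).2 (Finset.ne_of_mem_erase hw).symm)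
    rw [← cond_mul_eq_inter hP, hunif, SimpleGraph.complete_graph_degree]
  have hsub : P ∩ stayEvent X t ⊆
      ⋃ w ∈ (saturatedSet x t).erase (x t), P ∩ {ω' | X (t + 1) ω' = w} := by
    rintro ω' ⟨hω'P, hstay⟩
    rw [stayEvent, Set.mem_ofPred_eq, hω'P t le_rfl, saturatedSet_congr hω'P] at hstay
    exact Set.mem_biUnion (Finset.mem_erase.2 hstay.symm) ⟨hω'P, rfl⟩
  calc μ (P ∩ stayEvent X t)
      ≤ ∑ w ∈ (saturatedSet x t).erase (x t), μ (P ∩ {ω' | X (t + 1) ω' = w}) :=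
        (measure_mono hsub).trans (measure_biUnion_finset_le _ _)
    _ = ((b - 1 : ℕ) / (Fintype.card V - 1 : ℕ) : ℝ≥0∞) * μ P := by
        rw [Finset.sum_congr rfl hstep, Finset.sum_const, nsmul_eq_mul,
          Finset.card_erase_of_mem (mem_saturatedSet.2 hsat), hcard, div_eq_mul_inv, mul_assoc]

lemma IsGRW.tsum_measure_stuckEvent_le [DecidableEq V] [IsProbabilityMeasure μ]
    (hX : IsGRW (⊤ : SimpleGraph V) μ X) (hb : 1 ≤ b) (hbV : b < Fintype.card V) :
    ∑' t, μ (stuckEvent X b t) ≤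
      ((Fintype.card V - 1 : ℕ) / (Fintype.card V - b : ℕ) : ℝ≥0∞) := by
  set q : ℝ≥0∞ := (b - 1 : ℕ) / (Fintype.card V - 1 : ℕ)
  have hq : q < 1 := by
    rw [ENNReal.div_lt_iff (Or.inl (Nat.cast_ne_zero.2 (by omega)))
      (Or.inl (ENNReal.natCast_ne_top _)), one_mul, Nat.cast_lt]
    omega
  have hrec (t : ℕ) :
      μ (stuckEvent X b (t + 1)) ≤ q * μ (stuckEvent X b t) + μ (enterEvent X b t) :=
    calc μ (stuckEvent X b (t + 1))
        ≤ μ (enterEvent X b t ∪ stuckEvent X b t ∩ stayEvent X t) :=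
          measure_mono_ae <| hX.ae_isGreedyStep.mono fun ω hω hstuck =>
            mem_enterEvent_or_mem_stuckEvent_inter_stayEvent (hω t) hstuck
      _ ≤ μ (enterEvent X b t) + q * μ (stuckEvent X b t) :=
          (measure_union_le _ _).trans (add_le_add le_rfl
            hX.measure_stuckEvent_inter_stayEvent_le)
      _ = _ := add_comm _ _
  have henter : ∑' t, μ (enterEvent X b t) ≤ 1 :=
    (tsum_meas_le_meas_iUnion_of_disjoint μ
      (fun _ => dependsOnPrefix_enterEvent.measurableSet hX.1)
      pairwise_disjoint_enterEvent).trans prob_le_one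
  calc ∑' t, μ (stuckEvent X b t)
      ≤ (μ (stuckEvent X b 0) + ∑' t, μ (enterEvent X b t)) / (1 - q) :=
        ENNReal.tsum_le_div_of_le_mul_add hq (fun _ => measure_ne_top _ _) hrec
    _ ≤ 1 / (1 - q) := by
        rw [stuckEvent_zero hbV, measure_empty, zero_add]
        gcongr
    _ = _ := by
        rw [ENNReal.one_sub_natCast_sub_one_div hb hbV, one_div,
          ENNReal.inv_div (Or.inl (by simp)) (Or.inl (Nat.cast_ne_zero.2 (by omega)))]

lemma IsGRW.tsum_measure_not_isSaturated_le [DecidableEq V] [IsProbabilityMeasure μ]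
    (hX : IsGRW (⊤ : SimpleGraph V) μ X) :
    ∑' t, μ {ω | ¬ IsSaturated (X · ω) t (X t ω)} ≤ (Fintype.card V).choose 2 := by
  classical
  refine tsum_measure_le_of_ae_card_filter_le
    (fun t => DependsOnPrefix.measurableSet (t := t) hX.1 fun ω ω' h => ?_)
    (hX.ae_isGreedyStep.mono fun ω hω m => ?_)
  · simp only [Set.mem_ofPred_eq, h t le_rfl, isSaturated_congr h, imp_self]
  · simp only [Set.mem_ofPred_eq]
    rw [← SimpleGraph.card_edgeFinset_top_eq_card_choose_two]
    refine (Finset.card_le_card (Finset.monotone_filter_right _ fun t _ ht =>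
      (hω t).step_notMem_traversed ht)).trans ?_
    exact card_filter_fresh_step_le ⊤ (fun t => (hω t).1) m

theorem IsGRW.lintegral_edgeCoverTime_le [DecidableEq V] [IsProbabilityMeasure μ]
    (hX : IsGRW (⊤ : SimpleGraph V) μ X) :
    ∫⁻ ω, (edgeCoverTime ⊤ X ω : ℝ≥0∞) ∂μ ≤ (Fintype.card V).choose 2 +
      ∑ b ∈ Icc 1 (Fintype.card V - 1),
        ((Fintype.card V - 1 : ℕ) / (Fintype.card V - b : ℕ) : ℝ≥0∞) :=
  calc ∫⁻ ω, (edgeCoverTime ⊤ X ω : ℝ≥0∞) ∂μ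
      = ∑' t, μ {ω | ¬ (⊤ : SimpleGraph V).edgeSet ⊆ traversed (X · ω) t} :=
        lintegral_edgeCoverTime ⊤ hX.1
    _ ≤ ∑' t, (μ {ω | ¬ IsSaturated (X · ω) t (X t ω)} +
          ∑ b ∈ Icc 1 (Fintype.card V - 1), μ (stuckEvent X b t)) :=
        ENNReal.tsum_le_tsum fun t =>
          (measure_mono setOf_not_edgeSet_subset_traversed_subset).trans <|
            (measure_union_le _ _).trans (add_le_add le_rfl (measure_biUnion_finset_le _ _))
    _ = ∑' t, μ {ω | ¬ IsSaturated (X · ω) t (X t ω)} +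
          ∑ b ∈ Icc 1 (Fintype.card V - 1), ∑' t, μ (stuckEvent X b t) := by
        rw [ENNReal.tsum_add, Summable.tsum_finsetSum fun _ _ => ENNReal.summable]
    _ ≤ _ := by
        gcongr with b hb
        · exact hX.tsum_measure_not_isSaturated_le
        · have := Finset.mem_Icc.1 hb
          exact hX.tsum_measure_stuckEvent_le this.1 (by omega)

end CompleteGraph

end GRW

lemma sum_natCast_div_eq_ofReal_sum (n : ℕ) :
    ∑ i ∈ Finset.Icc 1 (n - 1), ((n - 1 : ℕ) / (n - i : ℕ) : ℝ≥0∞) =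
      ENNReal.ofReal (∑ i ∈ Finset.Icc 1 (n - 1), ((n : ℝ) - 1) / ((n : ℝ) - (i : ℝ))) := by
  rw [ENNReal.ofReal_sum_of_nonneg fun i hi => ?_]
  · refine Finset.sum_congr rfl fun i hi => ?_
    have hi := Finset.mem_Icc.1 hi
    have h1 : (n : ℝ) - 1 = (n - 1 : ℕ) := by rw [Nat.cast_sub (by omega), Nat.cast_one]
    have h2 : (n : ℝ) - i = (n - i : ℕ) := by rw [Nat.cast_sub (by omega)]
    rw [h1, h2, ENNReal.ofReal_div_of_pos (Nat.cast_pos.2 (by omega)), ENNReal.ofReal_natCast,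
      ENNReal.ofReal_natCast]
  · have hi := Finset.mem_Icc.1 hi
    have : (i : ℝ) < n := by exact_mod_cast (by omega : i < n)
    have : (1 : ℝ) ≤ n := by exact_mod_cast (by omega : 1 ≤ n)
    exact div_nonneg (by linarith) (by linarith)

theorem grw_stmt17_general (n : ℕ)
    {Ω : Type*} [MeasurableSpace Ω] (μ : MeasureTheory.Measure Ω)
    [MeasureTheory.IsProbabilityMeasure μ] (X : ℕ → Ω → Fin n)
    (hX : GRW.IsGRW (⊤ : SimpleGraph (Fin n)) μ X) :
    ∫⁻ ω, ((GRW.edgeCoverTime (⊤ : SimpleGraph (Fin n)) X ω : ℕ∞) : ℝ≥0∞) ∂μ ≤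
      (n.choose 2 : ℝ≥0∞) +
        ENNReal.ofReal (∑ i ∈ Finset.Icc 1 (n - 1), ((n : ℝ) - 1) / ((n : ℝ) - (i : ℝ))) := by
  have h := hX.lintegral_edgeCoverTime_le
  rwa [Fintype.card_fin, sum_natCast_div_eq_ofReal_sum] at h

/-- for the complete graph `Kₙ` and any rule `𝓡` (i.e. for any process
satisfying the greedy random walk conditions), the expected edge cover time satisfies
`𝔼[C_E(Kₙ)] ≤ C(n,2) + ∑_{i=1}^{n-1} (n-1)/(n-i)`. -/
theorem grw_stmt17 (n : ℕ) (hn : 2 ≤ n)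
    {Ω : Type*} [MeasurableSpace Ω] (μ : MeasureTheory.Measure Ω)
    [MeasureTheory.IsProbabilityMeasure μ] (X : ℕ → Ω → Fin n)
    (hX : GRW.IsGRW (⊤ : SimpleGraph (Fin n)) μ X) :
    ∫⁻ ω, ((GRW.edgeCoverTime (⊤ : SimpleGraph (Fin n)) X ω : ℕ∞) : ℝ≥0∞) ∂μ ≤
      (n.choose 2 : ℝ≥0∞) +
        ENNReal.ofReal (∑ i ∈ Finset.Icc 1 (n - 1), ((n : ℝ) - 1) / ((n : ℝ) - (i : ℝ))) :=
  grw_stmt17_general n μ X hX
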